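/- The monomials ā_S for S ∈ nbb(G) are linearly independent in the quadratic closure Ā(G) of the Orlik-Solomon algebra. -/

import Mathlib

/-- A set `S` is line-closed in the matroid `M` if it contains the closure of
each pair of its elements. -/
def IsLineClosed {n : ℕ} (M : Matroid (Fin n)) (S : Set (Fin n)) : Prop :=
  ∀ i ∈ S, ∀ j ∈ S, M.closure {i, j} ⊆ S

/-- The line-closure of `S`: the intersection of all line-closed sets containing `S`. -/
def lineClosure {n : ℕ} (M : Matroid (Fin n)) (S : Set (Fin n)) : Set (Fin n) :=
  ⋂₀ {T | S ⊆ T ∧ IsLineClosed M T}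

/-- The generator `e i` of the exterior algebra on `e₁, …, eₙ`. -/
noncomputable def gen (K : Type*) [CommRing K] {n : ℕ} (i : Fin n) :
    ExteriorAlgebra K (Fin n → K) :=
  ExteriorAlgebra.ι K (Pi.single i 1)

/-- The monomial `e_{i₁} ∧ ⋯ ∧ e_{i_p}` indexed by a list. -/
noncomputable def eProd (K : Type*) [CommRing K] {n : ℕ} (l : List (Fin n)) :
    ExteriorAlgebra K (Fin n → K) :=
  (l.map (gen K)).prod

/-- The boundary `∂ e_S = Σ (-1)^{k-1} e_{S - i_k}` of the monomial indexed by a list. -/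
noncomputable def bdryL (K : Type*) [CommRing K] {n : ℕ} (l : List (Fin n)) :
    ExteriorAlgebra K (Fin n → K) :=
  ∑ k : Fin l.length, ((-1 : K) ^ (k : ℕ)) • eProd K (l.eraseIdx k)

/-- The monomial `e_S` for a finite set `S`, listed in increasing order. -/
noncomputable def eS (K : Type*) [CommRing K] {n : ℕ} (S : Finset (Fin n)) :
    ExteriorAlgebra K (Fin n → K) :=
  eProd K (S.sort (· ≤ ·))

/-- The boundary `∂ e_S` for a finite set `S`, listed in increasing order. -/
noncomputable def bdryS (K : Type*) [CommRing K] {n : ℕ} (S : Finset (Fin n)) :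
    ExteriorAlgebra K (Fin n → K) :=
  bdryL K (S.sort (· ≤ ·))

/-- The quadratic part `𝒥` of the Orlik–Solomon ideal: the (two-sided) ideal of the
exterior algebra generated by the boundaries of dependent 3-element sets, as a
`K`-submodule. -/
noncomputable def OSJ (K : Type*) [CommRing K] {n : ℕ} (M : Matroid (Fin n)) :
    Submodule K (ExteriorAlgebra K (Fin n → K)) :=
  Submodule.span K {z | ∃ x y : ExteriorAlgebra K (Fin n → K), ∃ S : Finset (Fin n),
    S.card = 3 ∧ M.Dep ↑S ∧ z = x * bdryS K S * y}

/-- The Orlik–Solomon ideal `ℐ`: the (two-sided) ideal generated by the boundaries of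
all dependent sets, as a `K`-submodule. -/
noncomputable def OSI (K : Type*) [CommRing K] {n : ℕ} (M : Matroid (Fin n)) :
    Submodule K (ExteriorAlgebra K (Fin n → K)) :=
  Submodule.span K {z | ∃ x y : ExteriorAlgebra K (Fin n → K), ∃ S : Finset (Fin n), M.Dep ↑S ∧ z = x * bdryS K S * y}

/-- We encode a linear ordering of `[n]` by a permutation `π`: the element `i` comes
before `j` when `π i ≤ π j`.  `IsMinWrt π S m` says `m` is the minimum of `S`. -/
def IsMinWrt {n : ℕ} (π : Equiv.Perm (Fin n)) (S : Set (Fin n)) (m : Fin n) : Prop :=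
  m ∈ S ∧ ∀ j ∈ S, π m ≤ π j

/-- `S` is an nbb set for the linear order `π`. -/
def IsNbb {n : ℕ} (M : Matroid (Fin n)) (π : Equiv.Perm (Fin n))
    (S : Finset (Fin n)) : Prop :=
  ∀ i ∈ S, IsMinWrt π (lineClosure M {j | j ∈ S ∧ π i ≤ π j}) i

/-! For an nbb set `B = {b₁, …, b_p}` let `W_k` be the line-closure of
`{b ∈ B | π b_k ≤ π b}`. These form a chain of line-closed sets, and the nbb condition says
that `b_k` is the `π`-least element of `W_k`. Sending `e_i` to the indicator vector
`(1[i ∈ W_k])_k ∈ K^p` and taking the top-degree coefficient gives a functional `φ_B` on `ℰ`.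
In a simple matroid every member of a chain of line-closed sets meets a dependent triple in
nothing, everything, or one and the same point, so two of the three indicator vectors coincide
and `φ_B` kills `𝒥`. Finally `φ_B(e_B) = 1`, while `φ_B(e_S) ≠ 0` for `S ≠ B` forces
`∑_{b ∈ B} π b < ∑_{s ∈ S} π s`; this triangularity gives linear independence. -/

lemma subset_lineClosure {n : ℕ} (M : Matroid (Fin n)) (S : Set (Fin n)) :
    S ⊆ lineClosure M S :=
  fun _ hx => Set.mem_sInter.2 fun _ hT => hT.1 hx

lemma isLineClosed_lineClosure {n : ℕ} (M : Matroid (Fin n)) (S : Set (Fin n)) :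
    IsLineClosed M (lineClosure M S) :=
  fun i hi j hj _ hx => Set.mem_sInter.2 fun T hT =>
    hT.2 i (Set.mem_sInter.1 hi T hT) j (Set.mem_sInter.1 hj T hT) hx

lemma lineClosure_mono {n : ℕ} (M : Matroid (Fin n)) {S T : Set (Fin n)} (h : S ⊆ T) :
    lineClosure M S ⊆ lineClosure M T :=
  Set.sInter_subset_sInter fun _ hU => ⟨h.trans hU.1, hU.2⟩

section Chain

variable {ι α : Type*} {W : ι → Set α}

lemma forall_mem_iff_of_chain (hW : ∀ k k', W k ⊆ W k' ∨ W k' ⊆ W k) {a b c : α}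
    (hb : ∀ k, a ∈ W k → c ∈ W k → b ∈ W k) (hc : ∀ k, a ∈ W k → b ∈ W k → c ∈ W k)
    {k₀ : ι} (ha₀ : a ∈ W k₀) (hb₀ : b ∉ W k₀) (hc₀ : c ∉ W k₀) (k : ι) :
    b ∈ W k ↔ c ∈ W k := by
  rcases hW k k₀ with h | h
  · exact iff_of_false (fun hb' => hb₀ (h hb')) (fun hc' => hc₀ (h hc'))
  · exact ⟨hc k (h ha₀), hb k (h ha₀)⟩

lemma exists_forall_mem_iff_of_chain (hW : ∀ k k', W k ⊆ W k' ∨ W k' ⊆ W k) {x y z : α}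
    (hx : ∀ k, y ∈ W k → z ∈ W k → x ∈ W k) (hy : ∀ k, x ∈ W k → z ∈ W k → y ∈ W k)
    (hz : ∀ k, x ∈ W k → y ∈ W k → z ∈ W k) :
    (∀ k, x ∈ W k ↔ y ∈ W k) ∨ (∀ k, x ∈ W k ↔ z ∈ W k) ∨ (∀ k, y ∈ W k ↔ z ∈ W k) := by
  by_cases hxy : ∀ k, x ∈ W k ↔ y ∈ W k
  · exact Or.inl hxy
  obtain ⟨k₀, hk₀⟩ := not_forall.mp hxy
  have hz₀ : z ∉ W k₀ := fun hz₀ => hk₀ ⟨fun hx₀ => hy k₀ hx₀ hz₀, fun hy₀ => hx k₀ hy₀ hz₀⟩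
  by_cases hx₀ : x ∈ W k₀
  · have hy₀ : y ∉ W k₀ := fun hy₀ => hk₀ (iff_of_true hx₀ hy₀)
    exact Or.inr <| Or.inr <| forall_mem_iff_of_chain hW hy hz hx₀ hy₀ hz₀
  · have hy₀ : y ∈ W k₀ := by tauto
    exact Or.inr <| Or.inl <| forall_mem_iff_of_chain hW hx (fun k hy hx => hz k hx hy) hy₀ hx₀ hz₀

end Chain

lemma mem_closure_pair_of_dep {n : ℕ} {M : Matroid (Fin n)}
    (hsimple : ∀ i j : Fin n, i ≠ j → M.Indep {i, j}) {a b c : Fin n} (hab : a ≠ b)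
    (hdep : M.Dep {c, a, b}) : c ∈ M.closure {a, b} :=
  ((hsimple a b hab).insert_dep_iff.mp hdep).1

lemma exists_forall_mem_iff_of_dep {n : ℕ} {M : Matroid (Fin n)}
    (hsimple : ∀ i j : Fin n, i ≠ j → M.Indep {i, j}) {ι : Type*} {W : ι → Set (Fin n)}
    (hW : ∀ k k', W k ⊆ W k' ∨ W k' ⊆ W k) (hWM : ∀ k, IsLineClosed M (W k))
    {x y z : Fin n} (hxy : x ≠ y) (hxz : x ≠ z) (hyz : y ≠ z) (hdep : M.Dep {x, y, z}) :
    (∀ k, x ∈ W k ↔ y ∈ W k) ∨ (∀ k, x ∈ W k ↔ z ∈ W k) ∨ (∀ k, y ∈ W k ↔ z ∈ W k) := by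
  have hx := mem_closure_pair_of_dep hsimple hyz hdep
  have hy := mem_closure_pair_of_dep hsimple hxz (by rwa [Set.insert_comm])
  have hz := mem_closure_pair_of_dep hsimple hxy (by rwa [Set.insert_comm, Set.pair_comm z])
  exact exists_forall_mem_iff_of_chain hW (fun k hy' hz' => hWM k y hy' z hz' hx)
    (fun k hx' hz' => hWM k x hx' z hz' hy) (fun k hx' hy' => hWM k x hx' y hy' hz)

lemma ExteriorAlgebra.ι_mul_ι_boundary_eq_zero {R V : Type*} [CommRing R] [AddCommGroup V]
    [Module R V] {u₁ u₂ u₃ : V} (h : u₁ = u₂ ∨ u₁ = u₃ ∨ u₂ = u₃) :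
    ι R u₂ * ι R u₃ - ι R u₁ * ι R u₃ + ι R u₁ * ι R u₂ = 0 := by
  rcases h with rfl | rfl | rfl
  · simp
  · rw [ι_sq_zero, sub_zero, add_comm, ι_add_mul_swap]
  · simp

lemma bdryL_triple (K : Type*) [CommRing K] {n : ℕ} (x y z : Fin n) :
    bdryL K [x, y, z] = gen K y * gen K z - gen K x * gen K z + gen K x * gen K y := by
  simp [bdryL, eProd, Fin.sum_univ_three, sub_eq_add_neg]

lemma eS_eq_ιMulti (K : Type*) [CommRing K] {n p : ℕ} (S : Finset (Fin n)) (h : S.card = p) :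
    eS K S = ExteriorAlgebra.ιMulti K p (fun j => Pi.single (S.orderEmbOfFin h j) 1) := by
  rw [eS, eProd, ExteriorAlgebra.ιMulti_apply, ← S.listMap_orderEmbOfFin_finRange h,
    List.map_map, List.ofFn_eq_map]
  rfl

lemma Matrix.det_ite_le_eq_one (K : Type*) [CommRing K] {p : ℕ} {α : Type*} [LinearOrder α]
    {f : Fin p → α} (hf : Function.Injective f) :
    (Matrix.of fun j k => if f k ≤ f j then (1 : K) else 0).det = 1 := by
  let τ := Tuple.sort f
  have hτ : StrictMono (f ∘ τ) :=
    (Tuple.monotone_sort f).strictMono_of_injective (hf.comp τ.injective)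
  have hA : (Matrix.of fun j k => if f k ≤ f j then (1 : K) else 0) =
      (Matrix.of fun a b : Fin p => if b ≤ a then (1 : K) else 0).submatrix τ.symm τ.symm := by
    ext j k
    simp only [submatrix_apply, of_apply, ← hτ.le_iff_le, Function.comp_apply,
      Equiv.apply_symm_apply]
  rw [hA, det_submatrix_equiv_self, det_of_isLowerTriangular]
  · simp
  · intro i j hij
    simp [not_le.mpr (OrderDual.toDual_lt_toDual.mp hij)]

lemma Matrix.exists_perm_forall_ne_zero_of_det_ne_zero {R n : Type*} [CommRing R]
    [Fintype n] [DecidableEq n] {A : Matrix n n R} (h : A.det ≠ 0) :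
    ∃ σ : Equiv.Perm n, ∀ k, A (σ k) k ≠ 0 := by
  rw [det_apply] at h
  obtain ⟨σ, -, hσ⟩ := Finset.exists_ne_zero_of_sum_ne_zero h
  refine ⟨σ, fun k hk => hσ ?_⟩
  rw [Finset.prod_eq_zero (f := fun i => A (σ i) i) (Finset.mem_univ k) hk, smul_zero]

lemma Finset.sum_map_lt_sum_map {α β : Type*} [AddCommMonoid β] [PartialOrder β]
    [IsOrderedCancelAddMonoid β] {w : α → β} (hw : Function.Injective w) {p : ℕ}
    {f g : Fin p ↪ α} (hle : ∀ k, w (f k) ≤ w (g k)) (hne : univ.map f ≠ univ.map g) :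
    ∑ x ∈ univ.map f, w x < ∑ x ∈ univ.map g, w x := by
  simp only [sum_map]
  refine sum_lt_sum (fun k _ => hle k) ?_
  by_contra! h
  obtain rfl : f = g :=
    Function.Embedding.ext fun k => hw ((hle k).eq_of_not_lt (h k (mem_univ k)))
  exact hne rfl

lemma linearIndependent_of_dual_triangular {K M ι β : Type*} [CommRing K] [NoZeroDivisors K]
    [AddCommGroup M] [Module K M] [LinearOrder β] {v : ι → M} (φ : ι → Module.Dual K M)
    (w : ι → β) (hdiag : ∀ i, φ i (v i) ≠ 0) (htri : ∀ i j, j ≠ i → φ i (v j) ≠ 0 → w i < w j) :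
    LinearIndependent K v := by
  classical
  rw [linearIndependent_iff']
  intro s g hg i hi
  by_contra hgi
  obtain ⟨i₀, hi₀, hmax⟩ := (s.filter (g · ≠ 0)).exists_max_image w ⟨i, by simp [hi, hgi]⟩
  rw [Finset.mem_filter] at hi₀
  have hφ := congrArg (φ i₀) hg
  rw [map_sum, map_zero, Finset.sum_eq_single i₀] at hφ
  · exact mul_ne_zero hi₀.2 (hdiag i₀) (by simpa using hφ)
  · intro j hj hji
    by_cases hgj : g j = 0
    · simp [hgj]
    by_cases hφj : φ i₀ (v j) = 0
    · simp [hφj]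
    exact absurd (hmax j (Finset.mem_filter.mpr ⟨hj, hgj⟩)) (not_le.mpr (htri i₀ j hji hφj))
  · exact fun h => absurd hi₀.1 h

section FlagFunctional

variable (K : Type*) [CommRing K] {n p : ℕ}

noncomputable def indicatorVec (W : Fin p → Set (Fin n)) (i : Fin n) : Fin p → K :=
  fun k => (W k).indicator 1 i

lemma indicatorVec_congr {W : Fin p → Set (Fin n)} {a b : Fin n}
    (h : ∀ k, a ∈ W k ↔ b ∈ W k) : indicatorVec K W a = indicatorVec K W b :=
  funext fun k => by classical exact if_congr (h k) rfl rfl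

noncomputable def indicatorMap (W : Fin p → Set (Fin n)) : (Fin n → K) →ₗ[K] (Fin p → K) :=
  (Pi.basisFun K (Fin n)).constr K (indicatorVec K W)

lemma indicatorMap_single (W : Fin p → Set (Fin n)) (i : Fin n) :
    indicatorMap K W (Pi.single i 1) = indicatorVec K W i := by
  rw [← Pi.basisFun_apply, indicatorMap, Module.Basis.constr_basis]

lemma map_indicatorMap_gen (W : Fin p → Set (Fin n)) (i : Fin n) :
    ExteriorAlgebra.map (indicatorMap K W) (gen K i) =
      ExteriorAlgebra.ι K (indicatorVec K W i) := by
  rw [gen, ExteriorAlgebra.map_apply_ι, indicatorMap_single]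

lemma map_indicatorMap_bdryS {M : Matroid (Fin n)}
    (hsimple : ∀ i j : Fin n, i ≠ j → M.Indep {i, j}) {W : Fin p → Set (Fin n)}
    (hW : ∀ k k', W k ⊆ W k' ∨ W k' ⊆ W k) (hWM : ∀ k, IsLineClosed M (W k))
    {C : Finset (Fin n)} (hC : C.card = 3) (hdep : M.Dep C) :
    ExteriorAlgebra.map (indicatorMap K W) (bdryS K C) = 0 := by
  obtain ⟨x, y, z, hl⟩ := List.length_eq_three.mp (C.length_sort (· ≤ ·) ▸ hC)
  have hCxyz : (C : Set (Fin n)) = {x, y, z} := by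
    rw [← C.sort_toFinset (· ≤ ·), hl]
    simp
  obtain ⟨⟨hxy, hxz⟩, hyz⟩ : (x ≠ y ∧ x ≠ z) ∧ y ≠ z := by
    simpa [hl] using C.sort_nodup (· ≤ ·)
  rw [bdryS, hl, bdryL_triple, map_add, map_sub, map_mul, map_mul, map_mul,
    map_indicatorMap_gen, map_indicatorMap_gen, map_indicatorMap_gen]
  apply ExteriorAlgebra.ι_mul_ι_boundary_eq_zero
  rcases exists_forall_mem_iff_of_dep hsimple hW hWM hxy hxz hyz (hCxyz ▸ hdep)
    with h | h | h
  · exact Or.inl (indicatorVec_congr K h)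
  · exact Or.inr (Or.inl (indicatorVec_congr K h))
  · exact Or.inr (Or.inr (indicatorVec_congr K h))

noncomputable def topDet (p : ℕ) : ExteriorAlgebra K (Fin p → K) →ₗ[K] K :=
  ExteriorAlgebra.liftAlternating (Pi.single p Matrix.detRowAlternating)

lemma topDet_ιMulti (v : Fin p → Fin p → K) :
    topDet K p (ExteriorAlgebra.ιMulti K p v) = (Matrix.of v).det := by
  rw [topDet, ExteriorAlgebra.liftAlternating_apply_ιMulti, Pi.single_eq_same]
  rfl

lemma topDet_ιMulti_of_ne {i : ℕ} (h : i ≠ p) (v : Fin i → Fin p → K) :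
    topDet K p (ExteriorAlgebra.ιMulti K i v) = 0 := by
  rw [topDet, ExteriorAlgebra.liftAlternating_apply_ιMulti, Pi.single_eq_of_ne h]
  rfl

noncomputable def flagFunctional (W : Fin p → Set (Fin n)) :
    ExteriorAlgebra K (Fin n → K) →ₗ[K] K :=
  topDet K p ∘ₗ (ExteriorAlgebra.map (indicatorMap K W)).toLinearMap

lemma flagFunctional_eS (W : Fin p → Set (Fin n)) (S : Finset (Fin n)) (h : S.card = p) :
    flagFunctional K W (eS K S) =
      (Matrix.of fun j k => indicatorVec K W (S.orderEmbOfFin h j) k).det := by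
  rw [flagFunctional, LinearMap.comp_apply, AlgHom.toLinearMap_apply, eS_eq_ιMulti K S h,
    ExteriorAlgebra.map_apply_ιMulti, ← topDet_ιMulti]
  congr 2
  funext j
  exact indicatorMap_single K W _

lemma flagFunctional_eS_of_card_ne (W : Fin p → Set (Fin n)) {S : Finset (Fin n)}
    (h : S.card ≠ p) : flagFunctional K W (eS K S) = 0 := by
  rw [flagFunctional, LinearMap.comp_apply, AlgHom.toLinearMap_apply, eS_eq_ιMulti K S rfl,
    ExteriorAlgebra.map_apply_ιMulti, topDet_ιMulti_of_ne K h]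

lemma OSJ_le_ker_flagFunctional {M : Matroid (Fin n)}
    (hsimple : ∀ i j : Fin n, i ≠ j → M.Indep {i, j}) {W : Fin p → Set (Fin n)}
    (hW : ∀ k k', W k ⊆ W k' ∨ W k' ⊆ W k) (hWM : ∀ k, IsLineClosed M (W k)) :
    OSJ K M ≤ LinearMap.ker (flagFunctional K W) := by
  rw [OSJ, Submodule.span_le]
  rintro _ ⟨x, y, C, hC, hdep, rfl⟩
  simp [flagFunctional, map_indicatorMap_bdryS K hsimple hW hWM hC hdep]

end FlagFunctional

def nbbFlag {n : ℕ} (M : Matroid (Fin n)) (π : Equiv.Perm (Fin n)) (B : Finset (Fin n)) :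
    Fin B.card → Set (Fin n) :=
  fun k => lineClosure M {j | j ∈ B ∧ π (B.orderEmbOfFin rfl k) ≤ π j}

section Nbb

variable {n : ℕ} {M : Matroid (Fin n)} {π : Equiv.Perm (Fin n)} {B : Finset (Fin n)}

lemma nbbFlag_chain (k k' : Fin B.card) :
    nbbFlag M π B k ⊆ nbbFlag M π B k' ∨ nbbFlag M π B k' ⊆ nbbFlag M π B k :=
  (le_total (π (B.orderEmbOfFin rfl k)) (π (B.orderEmbOfFin rfl k'))).symm.imp
    (fun h => lineClosure_mono M fun _ hx => ⟨hx.1, h.trans hx.2⟩)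
    (fun h => lineClosure_mono M fun _ hx => ⟨hx.1, h.trans hx.2⟩)

lemma isLineClosed_nbbFlag (k : Fin B.card) : IsLineClosed M (nbbFlag M π B k) :=
  isLineClosed_lineClosure M _

lemma IsNbb.le_of_mem_nbbFlag (hB : IsNbb M π B) {k : Fin B.card} {x : Fin n}
    (hx : x ∈ nbbFlag M π B k) : π (B.orderEmbOfFin rfl k) ≤ π x :=
  (hB _ (B.orderEmbOfFin_mem rfl k)).2 x hx

lemma IsNbb.mem_nbbFlag_iff (hB : IsNbb M π B) (j k : Fin B.card) :
    B.orderEmbOfFin rfl j ∈ nbbFlag M π B k ↔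
      π (B.orderEmbOfFin rfl k) ≤ π (B.orderEmbOfFin rfl j) :=
  ⟨hB.le_of_mem_nbbFlag, fun h => subset_lineClosure M _ ⟨B.orderEmbOfFin_mem rfl j, h⟩⟩

lemma IsNbb.flagFunctional_eS_self (K : Type*) [CommRing K] (hB : IsNbb M π B) :
    flagFunctional K (nbbFlag M π B) (eS K B) = 1 := by
  rw [flagFunctional_eS K _ B rfl, ← Matrix.det_ite_le_eq_one K
    (π.injective.comp (B.orderEmbOfFin rfl).injective)]
  congr 1
  ext j k
  classical exact if_congr (hB.mem_nbbFlag_iff j k) rfl rfl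

lemma IsNbb.sum_lt_of_flagFunctional_eS_ne_zero (K : Type*) [CommRing K] (hB : IsNbb M π B)
    {S : Finset (Fin n)} (hSB : S ≠ B) (h : flagFunctional K (nbbFlag M π B) (eS K S) ≠ 0) :
    ∑ x ∈ B, (π x : ℕ) < ∑ x ∈ S, (π x : ℕ) := by
  have hcard : S.card = B.card := by
    by_contra hc
    exact h (flagFunctional_eS_of_card_ne K _ hc)
  rw [flagFunctional_eS K _ S hcard] at h
  obtain ⟨σ, hσ⟩ := Matrix.exists_perm_forall_ne_zero_of_det_ne_zero h
  have hmem (k : Fin B.card) : S.orderEmbOfFin hcard (σ k) ∈ nbbFlag M π B k := by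
    by_contra hk
    exact hσ k (by simp [indicatorVec, hk])
  let s := σ.toEmbedding.trans (S.orderEmbOfFin hcard).toEmbedding
  have hS : Finset.univ.map s = S := by
    rw [← Finset.map_map, Finset.map_univ_equiv, S.map_orderEmbOfFin_univ]
  rw [← B.map_orderEmbOfFin_univ rfl, ← hS]
  refine Finset.sum_map_lt_sum_map (w := fun x => (π x : ℕ)) (Fin.val_injective.comp π.injective)
    (fun k => hB.le_of_mem_nbbFlag (hmem k)) ?_
  rwa [hS, B.map_orderEmbOfFin_univ, ne_comm]

end Nbb

theorem nbb_monomials_linearIndependent_general (K : Type*) [Field K] {n : ℕ}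
    (M : Matroid (Fin n))
    (hsimple : ∀ i j : Fin n, i ≠ j → M.Indep {i, j}) (π : Equiv.Perm (Fin n)) :
    LinearIndependent K (fun S : {S : Finset (Fin n) // IsNbb M π S} =>
      (Submodule.Quotient.mk (eS K S.1) :
        ExteriorAlgebra K (Fin n → K) ⧸ OSJ K M)) := by
  let φ (B : {S : Finset (Fin n) // IsNbb M π S}) :
      Module.Dual K (ExteriorAlgebra K (Fin n → K) ⧸ OSJ K M) :=
    (OSJ K M).liftQ (flagFunctional K (nbbFlag M π B.1))
      (OSJ_le_ker_flagFunctional K hsimple nbbFlag_chain isLineClosed_nbbFlag)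
  refine linearIndependent_of_dual_triangular φ (fun S => ∑ x ∈ S.1, (π x : ℕ)) ?_ ?_
  · intro B
    simp [φ, B.2.flagFunctional_eS_self K]
  · intro B S hSB h
    exact B.2.sum_lt_of_flagFunctional_eS_ne_zero K (Subtype.coe_ne_coe.mpr hSB) h

/-- The monomials `ā_S`, for `S` an nbb set, are linearly independent in the quadratic
closure `Ā(G) = ℰ/𝒥`. -/
theorem nbb_monomials_linearIndependent (K : Type*) [Field K] {n : ℕ}
    (M : Matroid (Fin n)) (hE : M.E = Set.univ)
    (hsimple : ∀ i j : Fin n, i ≠ j → M.Indep {i, j}) (π : Equiv.Perm (Fin n)) :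
    LinearIndependent K (fun S : {S : Finset (Fin n) // IsNbb M π S} =>
      (Submodule.Quotient.mk (eS K S.1) :
        ExteriorAlgebra K (Fin n → K) ⧸ OSJ K M)) :=
  nbb_monomials_linearIndependent_general K M hsimple π
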